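/- arXiv:1905.12580 — 4 statements merged into one kernel-verified Lean document; each statement's English description precedes it below -/
import Mathlib

section
/- Let F = {q_1,...,q_k} be queries q_i : Z → {0,1} independent of an i.i.d. test set z_1,...,z_n drawn from D, and suppose M is an η similarity cover of F of size N_η. Then P(max_{1≤i≤k} |Ê_S[q_i] − E_D[q_i]| ≥ ε) ≤ 2N_η·exp(−nε²/2) + 2k·exp(−(nε/4)·log(1 + ε/(4(1−η)))) for any η ∈ [0,1). -/
/-!
Split `q = q'' + (q - q'')` and `-q = -q' + (q' - q)`. If the empirical mean of `q` deviates by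
`ε`, then either a cover element (or its negation) deviates by `ε / 2`, which Hoeffding's inequality
bounds by `exp (-n ε² / 2)` with a union bound over only `N_η` functions, or one of the differences
`q - q''`, `q' - q` deviates by `ε / 2`. These differences take values in `{-1, 0, 1}` and vanish
with probability at least `η`, so their moment generating function is at most
`exp ((eᵗ - 1 - t) (1 - η))`; Chernoff's bound at `t = log (1 + ε / (4 (1 - η)))` gives the second
term, with a union bound over the `k` queries.
-/

open MeasureTheory ProbabilityTheory Real

section SampleDeviation

variable {Z : Type*} [MeasurableSpace Z] (D : Measure Z) (n : ℕ)

def upperDeviation (f : Z → ℝ) (s : ℝ) : Set (Fin n → Z) :=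
  {ω | n * s ≤ ∑ j, (f (ω j) - ∫ z, f z ∂D)}

variable {D n}

lemma sum_sub_integral_eq_mul (f : Z → ℝ) (ω : Fin n → Z) :
    ∑ j, (f (ω j) - ∫ z, f z ∂D) = n * ((1 / n : ℝ) * ∑ j, f (ω j) - ∫ z, f z ∂D) := by
  -- also for `n = 0`, where `1 / n = 0` but the sum is empty
  rcases n.eq_zero_or_pos with rfl | hn
  · simp
  · rw [Finset.sum_sub_distrib, Finset.sum_const, Finset.card_univ, Fintype.card_fin, nsmul_eq_mul]
    field_simp

lemma mem_upperDeviation_or_neg_of_le_abs {f : Z → ℝ} {ε : ℝ} {ω : Fin n → Z}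
    (h : ε ≤ |(1 / n : ℝ) * ∑ j, f (ω j) - ∫ z, f z ∂D|) :
    ω ∈ upperDeviation D n f ε ∨ ω ∈ upperDeviation D n (-f) ε := by
  have hneg : ∑ j, ((-f) (ω j) - ∫ z, (-f) z ∂D) = -∑ j, (f (ω j) - ∫ z, f z ∂D) := by
    simp only [Pi.neg_apply, integral_neg, ← Finset.sum_neg_distrib, neg_sub_neg, neg_sub]
  simp only [upperDeviation, Set.mem_ofPred_eq, hneg, sum_sub_integral_eq_mul f ω]
  rw [← mul_neg]
  exact (le_abs.1 h).imp (mul_le_mul_of_nonneg_left · n.cast_nonneg)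
    (mul_le_mul_of_nonneg_left · n.cast_nonneg)

lemma upperDeviation_add_subset {f g : Z → ℝ} (hf : Integrable f D) (hg : Integrable g D)
    (s t : ℝ) :
    upperDeviation D n f (s + t) ⊆ upperDeviation D n g s ∪ upperDeviation D n (f - g) t := by
  intro ω hω
  by_contra! h
  simp only [upperDeviation, Set.mem_union, Set.mem_ofPred_eq, not_or, not_le] at hω h
  have : ∑ j, ((f - g) (ω j) - ∫ z, (f - g) z ∂D)
      = ∑ j, (f (ω j) - ∫ z, f z ∂D) - ∑ j, (g (ω j) - ∫ z, g z ∂D) := by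
    simp only [Pi.sub_apply, integral_sub hf hg, ← Finset.sum_sub_distrib]
    congr 1; ext; ring
  linarith

lemma measureReal_biUnion_union_le {α ι : Type*} [MeasurableSpace α] (μ : Measure α)
    [IsFiniteMeasure μ] (s : Finset ι) (A B : ι → Set α) :
    μ.real (⋃ i ∈ s, (A i ∪ B i)) ≤ ∑ i ∈ s, (μ.real (A i) + μ.real (B i)) :=
  (measureReal_biUnion_finset_le s _).trans
    (Finset.sum_le_sum fun i _ => measureReal_union_le (A i) (B i))

lemma measureReal_upperDeviation_le_of_mem_Icc [IsProbabilityMeasure D] {f : Z → ℝ}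
    (hf : Measurable f) {a b : ℝ} (hab : ∀ z, f z ∈ Set.Icc a b) {s : ℝ} (hs : 0 ≤ s) :
    (Measure.pi fun _ : Fin n => D).real (upperDeviation D n f s)
      ≤ exp (-2 * n * s ^ 2 / (b - a) ^ 2) := by
  have hD : HasSubgaussianMGF (fun z => f z - ∫ z, f z ∂D) ((‖b - a‖₊ / 2) ^ 2) D :=
    hasSubgaussianMGF_of_mem_Icc hf.aemeasurable (ae_of_all _ hab)
  have hsample : ∀ j : Fin n, HasSubgaussianMGF (fun ω : Fin n → Z => f (ω j) - ∫ z, f z ∂D)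
      ((‖b - a‖₊ / 2) ^ 2) (Measure.pi fun _ => D) := fun j =>
    .of_map (measurable_pi_apply j).aemeasurable
      (by rwa [(measurePreserving_eval (fun _ => D) j).map_eq])
  have h := HasSubgaussianMGF.measure_sum_ge_le_of_iIndepFun
    (iIndepFun_pi (X := fun _ z => f z - ∫ z, f z ∂D) fun _ => by fun_prop)
    (s := Finset.univ) (fun j _ => hsample j) (ε := n * s) (by positivity)
  refine h.trans_eq ?_
  congr 1
  rcases n.eq_zero_or_pos with rfl | hn
  · simp
  have hn' : (n : ℝ) ≠ 0 := by positivity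
  push_cast
  rw [Finset.sum_const, Finset.card_univ, Fintype.card_fin, nsmul_eq_mul, Real.norm_eq_abs,
    div_pow, sq_abs]
  generalize (b - a) ^ 2 = d
  calc -(n * s) ^ 2 / (2 * (n * (d / 2 ^ 2))) = n * (-2 * n * s ^ 2) / (n * d) := by ring
    _ = -2 * n * s ^ 2 / d := mul_div_mul_left _ _ hn'

lemma measureReal_upperDeviation_le_exp_mul_mgf_pow [IsProbabilityMeasure D] {f : Z → ℝ}
    (hf : Measurable f) {t : ℝ} (ht : 0 ≤ t)
    (hint : Integrable (fun z => exp (t * (f z - ∫ z, f z ∂D))) D) (s : ℝ) :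
    (Measure.pi fun _ : Fin n => D).real (upperDeviation D n f s)
      ≤ exp (-t * (n * s)) * mgf (fun z => f z - ∫ z, f z ∂D) D t ^ n := by
  set X : Fin n → (Fin n → Z) → ℝ := fun j ω => f (ω j) - ∫ z, f z ∂D
  have hindep : iIndepFun X (Measure.pi fun _ => D) :=
    iIndepFun_pi (X := fun _ z => f z - ∫ z, f z ∂D) fun _ => by fun_prop
  have hX : ∀ j, Measurable (X j) := fun j => by fun_prop
  have hmap : ∀ j : Fin n, (Measure.pi fun _ => D).map (fun ω => ω j) = D := fun j =>
    (measurePreserving_eval (fun _ => D) j).map_eq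
  have hintX : ∀ j, Integrable (fun ω => exp (t * X j ω)) (Measure.pi fun _ => D) := fun j =>
    (measurePreserving_eval (fun _ => D) j).integrable_comp_of_integrable hint
  have hmgfX : ∀ j, mgf (X j) (Measure.pi fun _ => D) t = mgf (fun z => f z - ∫ z, f z ∂D) D t :=
    fun j => by
      have h := mgf_map (X := fun z => f z - ∫ z, f z ∂D) (t := t)
        (measurable_pi_apply j).aemeasurable (by rw [hmap j]; exact hint.1)
      rw [hmap j] at h
      exact h.symm
  calc (Measure.pi fun _ : Fin n => D).real (upperDeviation D n f s)
      = (Measure.pi fun _ : Fin n => D).real {ω | n * s ≤ (∑ j, X j) ω} := by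
        simp only [Finset.sum_apply]; rfl
    _ ≤ exp (-t * (n * s)) * mgf (∑ j, X j) (Measure.pi fun _ => D) t :=
        measure_ge_le_exp_mul_mgf _ ht (hindep.integrable_exp_mul_sum hX fun j _ => hintX j)
    _ = exp (-t * (n * s)) * mgf (fun z => f z - ∫ z, f z ∂D) D t ^ n := by
        rw [hindep.mgf_sum hX, Finset.prod_congr rfl fun j _ => hmgfX j, Finset.prod_const,
          Finset.card_univ, Fintype.card_fin]

lemma exp_mul_le_of_mem_neg_one_zero_one {t x : ℝ} (ht : 0 ≤ t) (hx : x = -1 ∨ x = 0 ∨ x = 1) :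
    exp (t * x) ≤ 1 + t * x + (exp t - 1 - t) * |x| := by
  rcases hx with rfl | rfl | rfl
  · have h := Real.self_le_sinh_iff.2 ht
    rw [Real.sinh_eq] at h
    simp only [mul_neg_one, abs_neg, abs_one]
    linarith
  · simp
  · simp

lemma mgf_sub_integral_le_of_mem_neg_one_zero_one [IsProbabilityMeasure D] {f : Z → ℝ}
    (hf : Measurable f) (hval : ∀ z, f z = -1 ∨ f z = 0 ∨ f z = 1) {t β : ℝ} (ht : 0 ≤ t)
    (habs : ∫ z, |f z| ∂D ≤ β) :
    mgf (fun z => f z - ∫ z, f z ∂D) D t ≤ exp ((exp t - 1 - t) * β) := by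
  have hf_Icc : ∀ z, f z ∈ Set.Icc (-1 : ℝ) 1 := fun z => by
    rcases hval z with h | h | h <;> simp [h]
  have hfi : Integrable f D := .of_mem_Icc (-1) 1 hf.aemeasurable (ae_of_all _ hf_Icc)
  have hexp : Integrable (fun z => exp (t * f z)) D :=
    integrable_exp_mul_of_le t 1 ht hf.aemeasurable (ae_of_all _ fun z => (hf_Icc z).2)
  have hlin : Integrable (fun z => 1 + t * f z) D := (integrable_const 1).add (hfi.const_mul t)
  have hpoly : Integrable (fun z => 1 + t * f z + (exp t - 1 - t) * |f z|) D :=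
    hlin.add (hfi.abs.const_mul _)
  set p := ∫ z, f z ∂D
  have hc : 0 ≤ exp t - 1 - t := by linarith [add_one_le_exp t]
  have hmean : ∫ z, exp (t * f z) ∂D ≤ exp (t * p + (exp t - 1 - t) * β) :=
    calc ∫ z, exp (t * f z) ∂D ≤ ∫ z, (1 + t * f z + (exp t - 1 - t) * |f z|) ∂D :=
          integral_mono hexp hpoly fun z => exp_mul_le_of_mem_neg_one_zero_one ht (hval z)
      _ = 1 + t * p + (exp t - 1 - t) * ∫ z, |f z| ∂D := by
          rw [integral_add hlin (hfi.abs.const_mul _),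
            integral_add (integrable_const 1) (hfi.const_mul t), integral_const_mul,
            integral_const_mul]
          simp [p]
      _ ≤ 1 + t * p + (exp t - 1 - t) * β := by gcongr
      _ ≤ exp (t * p + (exp t - 1 - t) * β) := by
          linarith [add_one_le_exp (t * p + (exp t - 1 - t) * β)]
  calc mgf (fun z => f z - p) D t = (∫ z, exp (t * f z) ∂D) * exp (-(t * p)) := by
        simp only [mgf, sub_eq_add_neg, mul_add, mul_neg, exp_add, integral_mul_const]
    _ ≤ exp (t * p + (exp t - 1 - t) * β) * exp (-(t * p)) := by gcongr
    _ = exp ((exp t - 1 - t) * β) := by rw [← exp_add]; ring_nf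

lemma measureReal_upperDeviation_le_of_mem_neg_one_zero_one [IsProbabilityMeasure D]
    {f : Z → ℝ} (hf : Measurable f) (hval : ∀ z, f z = -1 ∨ f z = 0 ∨ f z = 1) {β s : ℝ}
    (hβ : 0 < β) (hs : 0 ≤ s) (habs : ∫ z, |f z| ∂D ≤ β) :
    (Measure.pi fun _ : Fin n => D).real (upperDeviation D n f s)
      ≤ exp (-(n * s / 2) * log (1 + s / (2 * β))) := by
  have hu : 0 < 1 + s / (2 * β) := by positivity
  set t := log (1 + s / (2 * β))
  have ht : 0 ≤ t := log_nonneg (by linarith [div_nonneg hs (by positivity : (0 : ℝ) ≤ 2 * β)])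
  have hint : Integrable (fun z => exp (t * (f z - ∫ z, f z ∂D))) D :=
    integrable_exp_mul_of_le t (1 - ∫ z, f z ∂D) ht (by fun_prop) (ae_of_all _ fun z => by
      rcases hval z with h | h | h <;> simp [h])
  have hkey : s / 2 ≤ t * (β + s / 2) := by
    have hlog := one_sub_inv_le_log_of_pos hu
    calc s / 2 = (1 - (1 + s / (2 * β))⁻¹) * (β + s / 2) := by field_simp; ring
      _ ≤ t * (β + s / 2) := by gcongr
  have hcβ : (exp t - 1 - t) * β = s / 2 - t * β := by
    rw [exp_log hu]; field_simp; ring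
  calc (Measure.pi fun _ : Fin n => D).real (upperDeviation D n f s)
      ≤ exp (-t * (n * s)) * mgf (fun z => f z - ∫ z, f z ∂D) D t ^ n :=
        measureReal_upperDeviation_le_exp_mul_mgf_pow hf ht hint s
    _ ≤ exp (-t * (n * s)) * exp ((exp t - 1 - t) * β) ^ n := by
        gcongr
        · exact mgf_nonneg
        · exact mgf_sub_integral_le_of_mem_neg_one_zero_one hf hval ht habs
    _ ≤ exp (-(n * s / 2) * t) := by
        rw [← exp_nat_mul, ← exp_add, hcβ, exp_le_exp]
        nlinarith [mul_le_mul_of_nonneg_left hkey n.cast_nonneg]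

lemma integral_abs_sub_le_one_sub_measureReal_eq [IsProbabilityMeasure D] {g h : Z → ℝ}
    (hg : Measurable g) (hh : Measurable h) (hgh : ∀ z, |g z - h z| ≤ 1) :
    ∫ z, |g z - h z| ∂D ≤ 1 - D.real {z | g z = h z} := by
  have hs : MeasurableSet {z | g z = h z} := measurableSet_eq_fun hg hh
  calc ∫ z, |g z - h z| ∂D ≤ ∫ z, {z | g z = h z}ᶜ.indicator 1 z ∂D := by
        refine integral_mono_of_nonneg (ae_of_all _ fun z => abs_nonneg _)
          ((integrable_const 1).indicator hs.compl) (ae_of_all _ fun z => ?_)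
        by_cases hz : g z = h z
        · simp [hz]
        · simpa [hz] using hgh z
    _ = 1 - D.real {z | g z = h z} := by
        rw [integral_indicator_one hs.compl, probReal_compl_eq_one_sub hs]

lemma sub_eq_neg_one_or_zero_or_one {x y : ℝ} (hx : x = 0 ∨ x = 1) (hy : y = 0 ∨ y = 1) :
    x - y = -1 ∨ x - y = 0 ∨ x - y = 1 := by
  rcases hx with rfl | rfl <;> rcases hy with rfl | rfl <;> norm_num

lemma integrable_of_eq_zero_or_one [IsFiniteMeasure D] {f : Z → ℝ} (hf : Measurable f)
    (hval : ∀ z, f z = 0 ∨ f z = 1) : Integrable f D :=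
  .of_mem_Icc 0 1 hf.aemeasurable (ae_of_all _ fun z => by rcases hval z with h | h <;> simp [h])

lemma mem_upperDeviation_union_of_le_abs {f lo up : Z → ℝ} (hf : Integrable f D)
    (hlo : Integrable lo D) (hup : Integrable up D) {ε : ℝ} {ω : Fin n → Z}
    (h : ε ≤ |(1 / n : ℝ) * ∑ j, f (ω j) - ∫ z, f z ∂D|) :
    ω ∈ upperDeviation D n up (ε / 2) ∪ upperDeviation D n (-lo) (ε / 2) ∨
      ω ∈ upperDeviation D n (f - up) (ε / 2) ∪ upperDeviation D n (lo - f) (ε / 2) := by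
  rcases mem_upperDeviation_or_neg_of_le_abs h with h | h <;> rw [← add_halves ε] at h
  · rcases upperDeviation_add_subset hf hup _ _ h with h | h
    · exact Or.inl (Or.inl h)
    · exact Or.inr (Or.inl h)
  · rcases upperDeviation_add_subset hf.neg hlo.neg _ _ h with h | h
    · exact Or.inl (Or.inr h)
    · rw [neg_sub_neg] at h
      exact Or.inr (Or.inr h)

lemma measureReal_upperDeviation_add_neg_le_of_eq_zero_or_one [IsProbabilityMeasure D]
    {f : Z → ℝ} (hf : Measurable f) (hval : ∀ z, f z = 0 ∨ f z = 1) {s : ℝ} (hs : 0 ≤ s) :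
    (Measure.pi fun _ : Fin n => D).real (upperDeviation D n f s) +
        (Measure.pi fun _ : Fin n => D).real (upperDeviation D n (-f) s)
      ≤ 2 * exp (-2 * n * s ^ 2) := by
  have h₁ := measureReal_upperDeviation_le_of_mem_Icc (D := D) (n := n) hf (a := 0) (b := 1)
    (fun z => by rcases hval z with h | h <;> simp [h]) hs
  have h₂ := measureReal_upperDeviation_le_of_mem_Icc (D := D) (n := n) hf.neg (a := -1) (b := 0)
    (fun z => by rcases hval z with h | h <;> simp [h]) hs
  rw [sub_zero, one_pow, div_one] at h₁
  rw [zero_sub, neg_neg, one_pow, div_one] at h₂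
  linarith

lemma measureReal_upperDeviation_sub_le_of_le_measureReal_eq [IsProbabilityMeasure D]
    {g h : Z → ℝ} (hg : Measurable g) (hh : Measurable h) (hg01 : ∀ z, g z = 0 ∨ g z = 1)
    (hh01 : ∀ z, h z = 0 ∨ h z = 1) {η s : ℝ} (hη : η < 1) (hs : 0 ≤ s)
    (hsim : η ≤ D.real {z | g z = h z}) :
    (Measure.pi fun _ : Fin n => D).real (upperDeviation D n (g - h) s)
      ≤ exp (-(n * s / 2) * log (1 + s / (2 * (1 - η)))) := by
  have hval : ∀ z, (g - h) z = -1 ∨ (g - h) z = 0 ∨ (g - h) z = 1 := fun z =>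
    sub_eq_neg_one_or_zero_or_one (hg01 z) (hh01 z)
  refine measureReal_upperDeviation_le_of_mem_neg_one_zero_one (hg.sub hh) hval (by linarith) hs
    ((integral_abs_sub_le_one_sub_measureReal_eq hg hh fun z => ?_).trans (by linarith))
  rcases hval z with hz | hz | hz <;> simp [← Pi.sub_apply, hz]

end SampleDeviation

theorem stmt_10_general {Z : Type*} [MeasurableSpace Z] (D : Measure Z) [IsProbabilityMeasure D]
    (n k : ℕ)
    (q : Fin k → Z → ℝ) (hqmeas : ∀ i, Measurable (q i))
    (hqval : ∀ i z, q i z = 0 ∨ q i z = 1)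
    (η ε : ℝ) (hη1 : η < 1) (hε : 0 < ε)
    (M : Finset (Z → ℝ)) (hMmeas : ∀ m ∈ M, Measurable m)
    (hMval : ∀ m ∈ M, ∀ z, m z = 0 ∨ m z = 1)
    (hcover : ∀ i : Fin k, ∃ q' ∈ M, ∃ q'' ∈ M,
      (∫ z, q' z ∂D) ≤ (∫ z, q i z ∂D) ∧ (∫ z, q i z ∂D) ≤ (∫ z, q'' z ∂D) ∧
      η ≤ (D {z | q' z = q i z}).toReal ∧ η ≤ (D {z | q'' z = q i z}).toReal) :
    ((Measure.pi fun _ : Fin n => D)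
      {ω | ∃ i : Fin k, |(1 / n : ℝ) * ∑ j, q i (ω j) - ∫ z, q i z ∂D| ≥ ε}).toReal ≤
      2 * M.card * Real.exp (-(n * ε ^ 2 / 2)) +
        2 * k * Real.exp (-(n * ε / 4) * Real.log (1 + ε / (4 * (1 - η)))) := by
  choose lo hloM up hupM _ _ hlo hup using hcover
  set μ := Measure.pi fun _ : Fin n => D
  set U : (Z → ℝ) → Set (Fin n → Z) := fun f => upperDeviation D n f (ε / 2)
  have hM : ∀ m ∈ M, μ.real (U m) + μ.real (U (-m)) ≤ 2 * exp (-(n * ε ^ 2 / 2)) :=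
    fun m hm => (measureReal_upperDeviation_add_neg_le_of_eq_zero_or_one (hMmeas m hm)
      (hMval m hm) (by positivity)).trans_eq (by ring_nf)
  have hq : ∀ i, μ.real (U (q i - up i)) + μ.real (U (lo i - q i))
      ≤ 2 * exp (-(n * ε / 4) * log (1 + ε / (4 * (1 - η)))) := by
    intro i
    have h₁ := measureReal_upperDeviation_sub_le_of_le_measureReal_eq (n := n) (hqmeas i)
      (hMmeas _ (hupM i)) (hqval i) (hMval _ (hupM i)) hη1 (by positivity : 0 ≤ ε / 2)
      (by rw [measureReal_def]; simpa only [eq_comm] using hup i)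
    have h₂ := measureReal_upperDeviation_sub_le_of_le_measureReal_eq (n := n)
      (hMmeas _ (hloM i)) (hqmeas i) (hMval _ (hloM i)) (hqval i) hη1
      (by positivity : 0 ≤ ε / 2) (hlo i)
    rw [show n * (ε / 2) / 2 = n * ε / 4 by ring, div_div, ← mul_assoc,
      show (2 : ℝ) * 2 = 4 by norm_num] at h₁ h₂
    linarith
  have hsub : {ω | ∃ i : Fin k, |(1 / n : ℝ) * ∑ j, q i (ω j) - ∫ z, q i z ∂D| ≥ ε} ⊆
      (⋃ m ∈ M, (U m ∪ U (-m))) ∪ ⋃ i ∈ Finset.univ, (U (q i - up i) ∪ U (lo i - q i)) := by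
    rintro ω ⟨i, hi⟩
    rcases mem_upperDeviation_union_of_le_abs (integrable_of_eq_zero_or_one (hqmeas i) (hqval i))
      (integrable_of_eq_zero_or_one (hMmeas _ (hloM i)) (hMval _ (hloM i)))
      (integrable_of_eq_zero_or_one (hMmeas _ (hupM i)) (hMval _ (hupM i))) hi with (h | h) | h
    · exact Or.inl (Set.mem_biUnion (hupM i) (Or.inl h))
    · exact Or.inl (Set.mem_biUnion (hloM i) (Or.inr h))
    · exact Or.inr (Set.mem_biUnion (Finset.mem_univ i) h)
  calc μ.real _
      ≤ μ.real ((⋃ m ∈ M, (U m ∪ U (-m))) ∪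
          ⋃ i ∈ Finset.univ, (U (q i - up i) ∪ U (lo i - q i))) := measureReal_mono hsub
    _ ≤ ∑ m ∈ M, (μ.real (U m) + μ.real (U (-m))) +
          ∑ i, (μ.real (U (q i - up i)) + μ.real (U (lo i - q i))) :=
        (measureReal_union_le _ _).trans
          (add_le_add (measureReal_biUnion_union_le ..) (measureReal_biUnion_union_le ..))
    _ ≤ ∑ _m ∈ M, 2 * exp (-(n * ε ^ 2 / 2)) +
          ∑ _i : Fin k, 2 * exp (-(n * ε / 4) * log (1 + ε / (4 * (1 - η)))) :=
        add_le_add (Finset.sum_le_sum hM) (Finset.sum_le_sum fun i _ => hq i)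
    _ = _ := by
        simp only [Finset.sum_const, Finset.card_univ, Fintype.card_fin, nsmul_eq_mul]
        ring

/-- Theorem 1, tail bound: similarity covers improve the union bound for
non-adaptively chosen {0,1}-valued queries evaluated on an i.i.d. test set. -/
theorem stmt_10 {Z : Type*} [MeasurableSpace Z] (D : Measure Z) [IsProbabilityMeasure D]
    (n k : ℕ) (hn : 0 < n) (hk : 0 < k)
    (q : Fin k → Z → ℝ) (hqmeas : ∀ i, Measurable (q i))
    (hqval : ∀ i z, q i z = 0 ∨ q i z = 1)
    (η ε : ℝ) (hη0 : 0 ≤ η) (hη1 : η < 1) (hε : 0 < ε)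
    (M : Finset (Z → ℝ)) (hMmeas : ∀ m ∈ M, Measurable m)
    (hMval : ∀ m ∈ M, ∀ z, m z = 0 ∨ m z = 1)
    (hcover : ∀ i : Fin k, ∃ q' ∈ M, ∃ q'' ∈ M,
      (∫ z, q' z ∂D) ≤ (∫ z, q i z ∂D) ∧ (∫ z, q i z ∂D) ≤ (∫ z, q'' z ∂D) ∧
      η ≤ (D {z | q' z = q i z}).toReal ∧ η ≤ (D {z | q'' z = q i z}).toReal) :
    ((Measure.pi fun _ : Fin n => D)
      {ω | ∃ i : Fin k, |(1 / n : ℝ) * ∑ j, q i (ω j) - ∫ z, q i z ∂D| ≥ ε}).toReal ≤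
      2 * M.card * Real.exp (-(n * ε ^ 2 / 2)) +
        2 * k * Real.exp (-(n * ε / 4) * Real.log (1 + ε / (4 * (1 - η)))) :=
  stmt_10_general D n k q hqmeas hqval η ε hη1 hε M hMmeas hMval hcover
end

section
/- Under the setting of the similarity cover bound, if η ≤ 1 − max{2·log(4k/δ)/n, √(log(4N_η/δ)/(2n))}, then with probability at least 1 − δ, max_{1≤i≤k} |Ê_S[q_i] − E_D[q_i]| ≤ max{√(2·log(4N_η/δ)/n), √(32(1−η)·log(4k/δ)/n)}. -/
/-!
Each `q i` is sandwiched between two cover elements `q'` and `q''`, and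
`Ê q - E q = (Ê - E)(q - q') + (Ê - E) q' = -((Ê - E)(q'' - q) - (Ê - E) q'')`.
Hoeffding's inequality, union-bounded over the `N_η` cover elements, puts every deviation
`(Ê - E) m` of a cover element below `a = √(log (4N_η/δ) / (2n))`. The differences `q - q'`
and `q'' - q` take values in `{-1, 0, 1}`, so their second moment is the disagreement
probability, at most `1 - η`; a Bernstein-type Chernoff bound (from `eˣ ≤ 1 + x + x²` for
`|x| ≤ 1`) then puts their deviations below `t = √(8(1 - η) log (4k/δ) / n)`, union-bounded over
the `k` queries. The Bernstein bound needs `t ≤ 2(1 - η)`, which is what the hypothesis on `η`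
guarantees. Hence all deviations are at most `a + t ≤ max (2a) (2t)` outside an event of
probability `δ`.
-/

open MeasureTheory ProbabilityTheory Real Finset
open scoped NNReal

section Sample

variable {Z : Type*} [MeasurableSpace Z] {D : Measure Z} {n : ℕ}

theorem measureReal_sum_pi_ge_le [IsProbabilityMeasure D] {X : Z → ℝ} {l : ℝ} (hl : 0 ≤ l)
    (hint : Integrable (fun z => exp (l * X z)) D) (ε : ℝ) :
    (Measure.pi fun _ : Fin n => D).real {ω | ε ≤ ∑ j, X (ω j)} ≤
      exp (-l * ε) * mgf X D l ^ n := by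
  have hprod (ω : Fin n → Z) : exp (l * ∑ j, X (ω j)) = ∏ j, exp (l * X (ω j)) := by
    rw [mul_sum, exp_sum]
  have h := measure_ge_le_exp_mul_mgf (μ := Measure.pi fun _ : Fin n => D)
    (X := fun ω => ∑ j, X (ω j)) ε hl
    (by simpa only [hprod] using Integrable.fintype_prod fun _ => hint)
  rwa [mgf, funext hprod, integral_fintype_prod_eq_pow (fun z => exp (l * X z)),
    Fintype.card_fin] at h

theorem ProbabilityTheory.HasSubgaussianMGF.measureReal_sum_pi_ge_le [IsProbabilityMeasure D]
    {X : Z → ℝ} {c : ℝ≥0} (h : HasSubgaussianMGF X c D) {ε : ℝ} (hε : 0 ≤ ε) :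
    (Measure.pi fun _ : Fin n => D).real {ω | ε ≤ ∑ j, X (ω j)} ≤
      exp (-ε ^ 2 / (2 * n * c)) := by
  have hX (j : Fin n) : HasSubgaussianMGF (fun ω : Fin n → Z => X (ω j)) c
      (Measure.pi fun _ : Fin n => D) :=
    .of_map (measurable_pi_apply j).aemeasurable
      (by rwa [(measurePreserving_eval (fun _ : Fin n => D) j).map_eq])
  have h := HasSubgaussianMGF.measure_sum_ge_le_of_iIndepFun
    (iIndepFun_pi (μ := fun _ : Fin n => D) fun _ => h.aemeasurable) (s := univ)
    (fun j _ => hX j) hε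
  simpa [mul_assoc] using h

theorem mgf_sub_integral_le_of_abs_le_one [IsProbabilityMeasure D] {Y : Z → ℝ}
    (hY : Measurable Y) (hb : ∀ z, |Y z| ≤ 1) {l : ℝ} (hl : |l| ≤ 1) :
    mgf (fun z => Y z - ∫ x, Y x ∂D) D l ≤ exp (l ^ 2 * ∫ z, Y z ^ 2 ∂D) := by
  have hYint : Integrable Y D := .of_bound hY.aestronglyMeasurable 1 (.of_forall hb)
  have hY2int : Integrable (fun z => Y z ^ 2) D :=
    .of_bound (hY.pow_const 2).aestronglyMeasurable 1 (.of_forall fun z => by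
      rw [norm_pow, Real.norm_eq_abs]; exact pow_le_one₀ (abs_nonneg _) (hb z))
  have hlY (z : Z) : |l * Y z| ≤ 1 := by
    rw [abs_mul]; exact mul_le_one₀ hl (abs_nonneg _) (hb z)
  have hexp (z : Z) : exp (l * Y z) ≤ 1 + l * Y z + l ^ 2 * Y z ^ 2 := by
    have h := (abs_le.mp (abs_exp_sub_one_sub_id_le (hlY z))).2
    linarith [mul_pow l (Y z) 2]
  have hlin : Integrable (fun z => 1 + l * Y z) D := (integrable_const 1).add (hYint.const_mul l)
  have hmgf : mgf Y D l ≤ 1 + l * ∫ z, Y z ∂D + l ^ 2 * ∫ z, Y z ^ 2 ∂D := by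
    calc mgf Y D l ≤ ∫ z, (1 + l * Y z + l ^ 2 * Y z ^ 2) ∂D :=
          integral_mono (.of_bound (by fun_prop) (exp 1) (.of_forall fun z => by
              rw [Real.norm_eq_abs, abs_of_pos (exp_pos _)]
              exact exp_le_exp.mpr (abs_le.mp (hlY z)).2))
            (hlin.add (hY2int.const_mul _)) hexp
      _ = _ := by
          rw [integral_add hlin (hY2int.const_mul _),
            integral_add (integrable_const 1) (hYint.const_mul l), integral_const_mul,
            integral_const_mul]
          simp
  calc mgf (fun z => Y z - ∫ x, Y x ∂D) D l
      = exp (-(l * ∫ z, Y z ∂D)) * mgf Y D l := by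
        simp only [sub_eq_neg_add]; rw [mgf_const_add, mul_neg]
    _ ≤ exp (-(l * ∫ z, Y z ∂D)) *
          exp (l * ∫ z, Y z ∂D + l ^ 2 * ∫ z, Y z ^ 2 ∂D) := by
        gcongr
        linarith [add_one_le_exp (l * ∫ z, Y z ∂D + l ^ 2 * ∫ z, Y z ^ 2 ∂D)]
    _ = _ := by rw [← exp_add]; ring_nf

noncomputable def sampleDev (D : Measure Z) (f : Z → ℝ) (ω : Fin n → Z) : ℝ :=
  ∑ j, (f (ω j) - ∫ z, f z ∂D)

theorem sampleDev_sub {f g : Z → ℝ} (hf : Integrable f D) (hg : Integrable g D)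
    (ω : Fin n → Z) :
    sampleDev D (fun z => f z - g z) ω = sampleDev D f ω - sampleDev D g ω := by
  simp only [sampleDev, integral_sub hf hg, ← sum_sub_distrib]
  exact sum_congr rfl fun _ _ => by ring

theorem mean_sub_integral_eq_sampleDev_div (hn : 0 < n) (f : Z → ℝ) (ω : Fin n → Z) :
    (1 / n : ℝ) * ∑ j, f (ω j) - ∫ z, f z ∂D = sampleDev D f ω / n := by
  simp only [sampleDev, sum_sub_distrib, sum_const, card_univ, Fintype.card_fin, nsmul_eq_mul]
  field_simp

theorem abs_mean_sub_integral_le_of_sampleDev (hn : 0 < n)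
    {f g h : Z → ℝ} (hf : Integrable f D) (hg : Integrable g D) (hh : Integrable h D)
    {ω : Fin n → Z} {a t : ℝ}
    (hgω : |sampleDev D g ω| < n * a) (hhω : |sampleDev D h ω| < n * a)
    (hfg : sampleDev D (fun z => f z - g z) ω < n * t)
    (hhf : sampleDev D (fun z => h z - f z) ω < n * t) :
    |(1 / n : ℝ) * ∑ j, f (ω j) - ∫ z, f z ∂D| ≤ a + t := by
  rw [sampleDev_sub hf hg] at hfg
  rw [sampleDev_sub hh hf] at hhf
  rw [abs_lt] at hgω hhω
  rw [mean_sub_integral_eq_sampleDev_div hn, abs_div, Nat.abs_cast,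
    div_le_iff₀ (by positivity), abs_le]
  constructor <;> linarith

theorem measureReal_abs_sampleDev_ge_le [IsProbabilityMeasure D] {m : Z → ℝ}
    (hm : Measurable m) (h01 : ∀ z, m z ∈ Set.Icc 0 1) {a : ℝ} (ha : 0 ≤ a) :
    (Measure.pi fun _ : Fin n => D).real {ω | n * a ≤ |sampleDev D m ω|} ≤
      2 * exp (-(2 * n * a ^ 2)) := by
  set c : ℝ≥0 := (‖(1 : ℝ) - 0‖₊ / 2) ^ 2
  have hc : (c : ℝ) = 1 / 4 := by simp [c]; norm_num
  have htail {X : Z → ℝ} (hX : HasSubgaussianMGF X c D) :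
      (Measure.pi fun _ : Fin n => D).real {ω | n * a ≤ ∑ j, X (ω j)} ≤
        exp (-(2 * n * a ^ 2)) := by
    refine (hX.measureReal_sum_pi_ge_le (by positivity)).trans_eq ?_
    rcases n.eq_zero_or_pos with rfl | hn
    · simp
    · rw [hc]; congr 1; field_simp; ring
  have h : HasSubgaussianMGF (fun z => m z - ∫ x, m x ∂D) c D :=
    hasSubgaussianMGF_of_mem_Icc hm.aemeasurable (ae_of_all D h01)
  calc _ ≤ (Measure.pi fun _ : Fin n => D).real
        ({ω | n * a ≤ ∑ j, (m (ω j) - ∫ z, m z ∂D)} ∪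
          {ω | n * a ≤ ∑ j, -(m (ω j) - ∫ z, m z ∂D)}) := by
        refine measureReal_mono fun ω hω => ?_
        simpa only [Set.mem_ofPred_eq, Set.mem_union, sum_neg_distrib] using le_abs.mp hω
    _ ≤ _ := (measureReal_union_le _ _).trans
        (by linarith [htail h, htail (X := fun z => -(m z - ∫ x, m x ∂D)) h.neg])

theorem measureReal_abs_sampleDev_ge_sqrt_log_le [IsProbabilityMeasure D] {m : Z → ℝ}
    (hm : Measurable m) (h01 : ∀ z, m z ∈ Set.Icc 0 1) (hn : 0 < n) {c : ℝ} (hc : 1 ≤ c) :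
    (Measure.pi fun _ : Fin n => D).real
        {ω | n * √(log c / (2 * n)) ≤ |sampleDev D m ω|} ≤ 2 / c := by
  refine (measureReal_abs_sampleDev_ge_le hm h01 (sqrt_nonneg _)).trans_eq ?_
  rw [sq_sqrt (by have := log_nonneg hc; positivity),
    show 2 * (n : ℝ) * (log c / (2 * n)) = log c by field_simp, exp_neg,
    exp_log (by linarith), div_eq_mul_inv]

theorem measureReal_sampleDev_ge_le_of_abs_le_one [IsProbabilityMeasure D] {Y : Z → ℝ}
    (hY : Measurable Y) (hb : ∀ z, |Y z| ≤ 1) {v t : ℝ} (hv : 0 < v)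
    (hvar : ∫ z, Y z ^ 2 ∂D ≤ v) (ht : 0 ≤ t) (htv : t ≤ 2 * v) :
    (Measure.pi fun _ : Fin n => D).real {ω | n * t ≤ sampleDev D Y ω} ≤
      exp (-(n * t ^ 2 / (4 * v))) := by
  -- the Chernoff parameter minimising `-l t + l ^ 2 v`
  set l := t / (2 * v)
  have hl : |l| ≤ 1 := by
    rw [abs_of_nonneg (by positivity), div_le_one (by positivity)]; exact htv
  have hint : Integrable (fun z => exp (l * (Y z - ∫ x, Y x ∂D))) D :=
    .of_bound (by fun_prop) (exp (|l| * (1 + |∫ x, Y x ∂D|))) (.of_forall fun z => by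
      rw [Real.norm_eq_abs, abs_of_pos (exp_pos _)]
      refine exp_le_exp.mpr ((le_abs_self _).trans ?_)
      rw [abs_mul]
      gcongr
      exact (abs_sub _ _).trans (by gcongr; exact hb z))
  calc _ ≤ exp (-l * (n * t)) * mgf (fun z => Y z - ∫ x, Y x ∂D) D l ^ n :=
        measureReal_sum_pi_ge_le (by positivity) hint _
    _ ≤ exp (-l * (n * t)) * exp (l ^ 2 * v) ^ n := by
        gcongr
        · exact (mgf_pos hint).le
        · exact (mgf_sub_integral_le_of_abs_le_one hY hb hl).trans (by gcongr)
    _ = _ := by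
        rw [← exp_nat_mul, ← exp_add]
        congr 1
        simp only [l]
        field_simp
        ring

theorem integral_sub_sq_eq_one_sub_measureReal [IsProbabilityMeasure D] {f g : Z → ℝ}
    (hf : Measurable f) (hg : Measurable g) (hf01 : ∀ z, f z = 0 ∨ f z = 1)
    (hg01 : ∀ z, g z = 0 ∨ g z = 1) :
    ∫ z, (f z - g z) ^ 2 ∂D = 1 - D.real {z | f z = g z} := by
  have hs : MeasurableSet {z | f z = g z} := measurableSet_eq_fun hf hg
  have hpt (z : Z) : (f z - g z) ^ 2 = {z | f z = g z}ᶜ.indicator 1 z := by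
    by_cases h : f z = g z
    · simp [h]
    · rw [Set.indicator_of_mem (by exact h)]
      rcases hf01 z with h1 | h1 <;> rcases hg01 z with h2 | h2 <;> simp_all
  simp_rw [hpt, integral_indicator_one hs.compl, probReal_compl_eq_one_sub hs]

theorem measureReal_sampleDev_sub_ge_le [IsProbabilityMeasure D] {f g : Z → ℝ}
    (hf : Measurable f) (hg : Measurable g) (hf01 : ∀ z, f z = 0 ∨ f z = 1)
    (hg01 : ∀ z, g z = 0 ∨ g z = 1) (hn : 0 < n) {c η : ℝ} (hc : 1 < c)
    (hagree : η ≤ D.real {z | f z = g z}) (hcη : 2 * log c / n ≤ 1 - η) :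
    (Measure.pi fun _ : Fin n => D).real
        {ω | n * √(8 * (1 - η) * log c / n) ≤ sampleDev D (fun z => f z - g z) ω} ≤
      1 / c := by
  have hlog : 0 < log c := log_pos hc
  have hη : 0 < 1 - η := lt_of_lt_of_le (by positivity) hcη
  have hvar : ∫ z, (f z - g z) ^ 2 ∂D ≤ 1 - η := by
    rw [integral_sub_sq_eq_one_sub_measureReal hf hg hf01 hg01]; linarith
  have hb (z : Z) : |f z - g z| ≤ 1 := by
    rcases hf01 z with h1 | h1 <;> rcases hg01 z with h2 | h2 <;> simp [h1, h2]
  have htv : √(8 * (1 - η) * log c / n) ≤ 2 * (1 - η) := by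
    rw [sqrt_le_iff]
    refine ⟨by positivity, ?_⟩
    calc 8 * (1 - η) * log c / n = 4 * (1 - η) * (2 * log c / n) := by ring
      _ ≤ 4 * (1 - η) * (1 - η) := by gcongr
      _ = _ := by ring
  refine (measureReal_sampleDev_ge_le_of_abs_le_one (hf.sub hg) hb hη hvar
    (sqrt_nonneg _) htv).trans ?_
  rw [sq_sqrt (by positivity), ← exp_log (by positivity : (0 : ℝ) < 1 / c), one_div, log_inv]
  gcongr
  field_simp
  linarith

end Sample

section Union

variable {Ω ι : Type*} [MeasurableSpace Ω] {μ : Measure Ω}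

theorem measureReal_biUnion_finset_le_card_mul (s : Finset ι) {A : ι → Set Ω} {b : ℝ}
    (h : ∀ i ∈ s, μ.real (A i) ≤ b) : μ.real (⋃ i ∈ s, A i) ≤ #s * b :=
  (measureReal_biUnion_finset_le s A).trans (by simpa using sum_le_sum h)

theorem one_sub_measureReal_le_of_compl_subset [IsProbabilityMeasure μ] {s t : Set Ω}
    (h : sᶜ ⊆ t) : 1 - μ.real s ≤ μ.real t := by
  have := measureReal_union_le (μ := μ) s t
  rw [Set.compl_subset_iff_union.mp h, probReal_univ] at this
  linarith

end Union

theorem natCast_mul_div_two_mul_le (N : ℕ) {x : ℝ} (hx : 0 ≤ x) :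
    N * (x / (2 * N)) ≤ x / 2 :=
  calc (N : ℝ) * (x / (2 * N)) = x / 2 * (N / N) := by ring
    _ ≤ x / 2 := mul_le_of_le_one_right (by positivity) (div_self_le_one _)

theorem one_sub_le_measureReal_abs_mean_sub_integral_le_of_sandwich {Z : Type*}
    [MeasurableSpace Z] {D : Measure Z} [IsProbabilityMeasure D] {n k : ℕ} (hn : 0 < n)
    {M : Finset (Z → ℝ)} {q q' q'' : Fin k → Z → ℝ} (hMint : ∀ m ∈ M, Integrable m D)
    (hqint : ∀ i, Integrable (q i) D) (hq'M : ∀ i, q' i ∈ M) (hq''M : ∀ i, q'' i ∈ M)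
    {a t δ : ℝ} (hδ : 0 ≤ δ)
    (hM : ∀ m ∈ M, (Measure.pi fun _ : Fin n => D).real
      {ω | n * a ≤ |sampleDev D m ω|} ≤ δ / (2 * M.card))
    (hq' : ∀ i, (Measure.pi fun _ : Fin n => D).real
      {ω | n * t ≤ sampleDev D (fun z => q i z - q' i z) ω} ≤ δ / (4 * k))
    (hq'' : ∀ i, (Measure.pi fun _ : Fin n => D).real
      {ω | n * t ≤ sampleDev D (fun z => q'' i z - q i z) ω} ≤ δ / (4 * k)) :
    1 - δ ≤ (Measure.pi fun _ : Fin n => D).real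
      {ω | ∀ i, |(1 / n : ℝ) * ∑ j, q i (ω j) - ∫ z, q i z ∂D| ≤ a + t} := by
  set P := Measure.pi fun _ : Fin n => D
  have hQ : ∀ i ∈ univ, P.real ({ω | n * t ≤ sampleDev D (fun z => q i z - q' i z) ω} ∪
      {ω | n * t ≤ sampleDev D (fun z => q'' i z - q i z) ω}) ≤ δ / (2 * k) := fun i _ =>
    (measureReal_union_le _ _).trans ((add_le_add (hq' i) (hq'' i)).trans_eq (by ring))
  have hbad : P.real ((⋃ m ∈ M, {ω | n * a ≤ |sampleDev D m ω|}) ∪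
      ⋃ i ∈ univ, ({ω | n * t ≤ sampleDev D (fun z => q i z - q' i z) ω} ∪
        {ω | n * t ≤ sampleDev D (fun z => q'' i z - q i z) ω})) ≤ δ := by
    have hQ' := measureReal_biUnion_finset_le_card_mul univ hQ
    rw [card_univ, Fintype.card_fin] at hQ'
    refine (measureReal_union_le _ _).trans ?_
    linarith [measureReal_biUnion_finset_le_card_mul M hM,
      natCast_mul_div_two_mul_le M.card hδ, natCast_mul_div_two_mul_le k hδ]
  refine (sub_le_sub_left hbad 1).trans (one_sub_measureReal_le_of_compl_subset fun ω hω i => ?_)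
  simp only [Set.mem_compl_iff, Set.mem_union, Set.mem_iUnion, not_or, not_exists,
    Set.mem_ofPred_eq, not_le] at hω
  exact abs_mean_sub_integral_le_of_sampleDev hn (hqint i) (hMint _ (hq'M i))
    (hMint _ (hq''M i)) (hω.1 _ (hq'M i)) (hω.1 _ (hq''M i)) (hω.2 i (mem_univ i)).1
    (hω.2 i (mem_univ i)).2

theorem sqrt_add_sqrt_le_max_sqrt_four_mul (x y : ℝ) :
    √x + √y ≤ max √(4 * x) √(4 * y) := by
  have h4 (x : ℝ) : √(4 * x) = 2 * √x := by
    rw [sqrt_mul (by norm_num), show (4 : ℝ) = 2 ^ 2 by norm_num, sqrt_sq (by norm_num)]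
  rw [h4, h4]
  rcases le_total √x √y with h | h
  · exact le_max_of_le_right (by linarith)
  · exact le_max_of_le_left (by linarith)

theorem stmt_11_general {Z : Type*} [MeasurableSpace Z] (D : Measure Z) [IsProbabilityMeasure D]
    (n k : ℕ) (hn : 0 < n)
    (q : Fin k → Z → ℝ) (hqmeas : ∀ i, Measurable (q i))
    (hqval : ∀ i z, q i z = 0 ∨ q i z = 1)
    (η δ : ℝ) (hδ : 0 < δ) (hδ1 : δ < 1)
    (M : Finset (Z → ℝ)) (hMmeas : ∀ m ∈ M, Measurable m)
    (hMval : ∀ m ∈ M, ∀ z, m z = 0 ∨ m z = 1)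
    (hcover : ∀ i : Fin k, ∃ q' ∈ M, ∃ q'' ∈ M,
      (∫ z, q' z ∂D) ≤ (∫ z, q i z ∂D) ∧ (∫ z, q i z ∂D) ≤ (∫ z, q'' z ∂D) ∧
      η ≤ (D {z | q' z = q i z}).toReal ∧ η ≤ (D {z | q'' z = q i z}).toReal)
    (hη : η ≤ 1 - max (2 * Real.log (4 * k / δ) / n)
      (Real.sqrt (Real.log (4 * M.card / δ) / (2 * n)))) :
    ((Measure.pi fun _ : Fin n => D)
      {ω | ∀ i : Fin k, |(1 / n : ℝ) * ∑ j, q i (ω j) - ∫ z, q i z ∂D| ≤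
        max (Real.sqrt (2 * Real.log (4 * M.card / δ) / n))
          (Real.sqrt (32 * (1 - η) * Real.log (4 * k / δ) / n))}).toReal ≥ 1 - δ := by
  set a := √(log (4 * M.card / δ) / (2 * n))
  set t := √(8 * (1 - η) * log (4 * k / δ) / n)
  choose q' hq'M q'' hq''M _ _ hq' hq'' using hcover
  have hint {f : Z → ℝ} (hf : Measurable f) (h01 : ∀ z, f z = 0 ∨ f z = 1) : Integrable f D :=
    .of_bound hf.aestronglyMeasurable 1
      (.of_forall fun z => by rcases h01 z with h | h <;> simp [h])
  have hM (m : Z → ℝ) (hm : m ∈ M) : (Measure.pi fun _ : Fin n => D).real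
      {ω | n * a ≤ |sampleDev D m ω|} ≤ δ / (2 * M.card) := by
    have hN : (1 : ℝ) ≤ M.card := by exact_mod_cast card_pos.mpr ⟨m, hm⟩
    refine (measureReal_abs_sampleDev_ge_sqrt_log_le (hMmeas m hm)
      (fun z => by rcases hMval m hm z with h | h <;> simp [h]) hn
      ((one_le_div hδ).mpr (by linarith))).trans_eq (by field_simp; ring)
  have hconf (i : Fin k) : 1 < 4 * k / δ ∧ 2 * log (4 * k / δ) / n ≤ 1 - η := by
    have hk : (1 : ℝ) ≤ k := by exact_mod_cast i.pos
    exact ⟨(one_lt_div hδ).mpr (by linarith),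
      by linarith [le_max_left (2 * log (4 * k / δ) / n) a]⟩
  have hmax : a + t ≤ max √(2 * log (4 * M.card / δ) / n)
      √(32 * (1 - η) * log (4 * k / δ) / n) := by
    convert sqrt_add_sqrt_le_max_sqrt_four_mul _ _ using 3 <;> field_simp <;> ring
  refine ge_iff_le.mpr ((one_sub_le_measureReal_abs_mean_sub_integral_le_of_sandwich hn
    (fun m hm => hint (hMmeas m hm) (hMval m hm)) (fun i => hint (hqmeas i) (hqval i))
    hq'M hq''M hδ.le hM (fun i => ?_) (fun i => ?_)).trans
    (measureReal_mono fun ω hω i => (hω i).trans hmax))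
  · refine (measureReal_sampleDev_sub_ge_le (hqmeas i) (hMmeas _ (hq'M i)) (hqval i)
      (hMval _ (hq'M i)) hn (hconf i).1 (by simpa only [eq_comm, measureReal_def] using hq' i)
      (hconf i).2).trans_eq (by field_simp)
  · exact (measureReal_sampleDev_sub_ge_le (hMmeas _ (hq''M i)) (hqmeas i) (hMval _ (hq''M i))
      (hqval i) hn (hconf i).1 (hq'' i) (hconf i).2).trans_eq (by field_simp)

/-- Theorem 1, high-probability form: if `η` is not too close to 1, with
probability `1 - δ` all deviations are at most
`max{√(2 log(4N_η/δ)/n), √(32(1-η) log(4k/δ)/n)}`. -/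
theorem stmt_11 {Z : Type*} [MeasurableSpace Z] (D : Measure Z) [IsProbabilityMeasure D]
    (n k : ℕ) (hn : 0 < n) (hk : 0 < k)
    (q : Fin k → Z → ℝ) (hqmeas : ∀ i, Measurable (q i))
    (hqval : ∀ i z, q i z = 0 ∨ q i z = 1)
    (η δ : ℝ) (hη0 : 0 ≤ η) (hδ : 0 < δ) (hδ1 : δ < 1)
    (M : Finset (Z → ℝ)) (hMmeas : ∀ m ∈ M, Measurable m)
    (hMval : ∀ m ∈ M, ∀ z, m z = 0 ∨ m z = 1)
    (hcover : ∀ i : Fin k, ∃ q' ∈ M, ∃ q'' ∈ M,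
      (∫ z, q' z ∂D) ≤ (∫ z, q i z ∂D) ∧ (∫ z, q i z ∂D) ≤ (∫ z, q'' z ∂D) ∧
      η ≤ (D {z | q' z = q i z}).toReal ∧ η ≤ (D {z | q'' z = q i z}).toReal)
    (hη : η ≤ 1 - max (2 * Real.log (4 * k / δ) / n)
      (Real.sqrt (Real.log (4 * M.card / δ) / (2 * n)))) :
    ((Measure.pi fun _ : Fin n => D)
      {ω | ∀ i : Fin k, |(1 / n : ℝ) * ∑ j, q i (ω j) - ∫ z, q i z ∂D| ≤
        max (Real.sqrt (2 * Real.log (4 * M.card / δ) / n))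
          (Real.sqrt (32 * (1 - η) * Real.log (4 * k / δ) / n))}).toReal ≥ 1 - δ :=
  stmt_11_general D n k hn q hqmeas hqval η δ hδ hδ1 M hMmeas hMval hcover hη
end

section
/- Let q_1, ..., q_k be a collection of queries adaptively chosen by a deterministic analyst from a set F of at most (n+1)^{k−1} possible queries, with ε = √(4(k^{1−α}·log(n+1) + log(2/δ))/n) and η = 1 − ε/(4(e^{εk^α} − 1)) for some α ∈ [0,1]. If F admits an η similarity cover of size at most (n+1)^{k^{1−α}}, then with probability at least 1 − δ, max_{1≤i≤k} |Ê_S[q_i] − E_D[q_i]| ≤ ε. -/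
/-!
Every adaptively chosen query lies in `F`, so it suffices to bound the probability that some
`f ∈ F` has a large deviation. Split `f = q + (f - q)` with `q ∈ M` the cover element of `f`.
By Hoeffding, each of the few cover elements deviates by `nε/2` with probability at most
`2 exp(-nε²/2)`. The difference `f - q` takes values in `{-1, 0, 1}` and is nonzero with
probability at most `1 - η`, so a Bennett-type Chernoff bound makes its deviation much rarer,
`2 exp(-(nε/4) log(1 + ε/(4(1-η))))`, small enough to survive a union bound over all of `F`.
The choice of `ε` and `η` makes each of the two union bounds at most `δ/2`.
-/

open MeasureTheory ProbabilityTheory Real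

lemma add_div_two_mul_log_le {m r : ℝ} (hm : 0 < m) (hr : 0 ≤ r) :
    r + r / 2 * log (1 + r / (2 * m)) ≤ (r + m) * log (1 + r / m) := by
  have h₁ : 2 * r ≤ (r + 2 * m) * log (1 + r / m) := by
    have := le_log_one_add_of_nonneg (by positivity : 0 ≤ r / m)
    rw [div_le_iff₀ (by positivity), show 2 * (r / m) = 2 * r / m by ring,
      show r / m + 2 = (r + 2 * m) / m by field_simp, mul_div_assoc',
      div_le_div_iff_of_pos_right hm] at this
    linarith
  have h₂ : log (1 + r / (2 * m)) ≤ log (1 + r / m) := by gcongr; linarith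
  nlinarith

lemma exp_mul_le_one_add_mul_add_sq_mul {y t : ℝ} (hy : y = -1 ∨ y = 0 ∨ y = 1) (ht : 0 ≤ t) :
    exp (t * y) ≤ 1 + t * y + y ^ 2 * (exp t - 1 - t) := by
  rcases hy with rfl | rfl | rfl
  · have := self_le_sinh_iff.2 ht
    rw [sinh_eq] at this
    simp only [mul_neg, mul_one, even_two, Even.neg_pow, one_pow, one_mul]
    linarith
  · simp
  · simp

section

variable {Z : Type*} [MeasurableSpace Z]

noncomputable def centeredSum (D : Measure Z) {n : ℕ} (h : Z → ℝ) (ω : Fin n → Z) : ℝ :=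
  ∑ j, (h (ω j) - D[h])

variable {D : Measure Z}

lemma centeredSum_sub {n : ℕ} {f g : Z → ℝ} (hf : Integrable f D) (hg : Integrable g D)
    (ω : Fin n → Z) :
    centeredSum D (fun z ↦ f z - g z) ω = centeredSum D f ω - centeredSum D g ω := by
  simp only [centeredSum, integral_sub hf hg, ← Finset.sum_sub_distrib]
  exact Finset.sum_congr rfl fun _ _ ↦ by ring

lemma half_le_abs_centeredSum_or_of_lt {n : ℕ} (hn : 0 < n) {f g : Z → ℝ}
    (hf : Integrable f D) (hg : Integrable g D) {ε : ℝ} {ω : Fin n → Z}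
    (h : ε < |(1 / n : ℝ) * ∑ j, f (ω j) - D[f]|) :
    n * ε / 2 ≤ |centeredSum D g ω| ∨ n * ε / 2 ≤ |centeredSum D (fun z ↦ f z - g z) ω| := by
  have hn' : (0 : ℝ) < n := by exact_mod_cast hn
  have hmean : (1 / n : ℝ) * ∑ j, f (ω j) - D[f] = centeredSum D f ω / n := by
    simp only [centeredSum, Finset.sum_sub_distrib, Finset.sum_const, Finset.card_univ,
      Fintype.card_fin, nsmul_eq_mul]
    field_simp
  rw [hmean, abs_div, abs_of_pos hn', lt_div_iff₀ hn'] at h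
  have htri : |centeredSum D f ω| ≤
      |centeredSum D g ω| + |centeredSum D (fun z ↦ f z - g z) ω| := by
    rw [centeredSum_sub hf hg]
    simpa using abs_add_le (centeredSum D g ω) (centeredSum D f ω - centeredSum D g ω)
  by_contra! hlt
  linarith [hlt.1, hlt.2]

variable [IsProbabilityMeasure D]

lemma measureReal_pi_le_sum_le {n : ℕ} {Y : Z → ℝ} (hY : Measurable Y) {t : ℝ} (ht : 0 ≤ t)
    (hint : Integrable (fun z ↦ exp (t * Y z)) D) (r : ℝ) :
    (Measure.pi fun _ : Fin n ↦ D).real {ω | r ≤ ∑ j, Y (ω j)} ≤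
      exp (-t * r) * mgf Y D t ^ n := by
  set X : Fin n → (Fin n → Z) → ℝ := fun j ω ↦ Y (ω j)
  have hX : ∀ j, Measurable (X j) := fun j ↦ hY.comp (measurable_pi_apply j)
  have hindep : iIndepFun X (Measure.pi fun _ ↦ D) := iIndepFun_pi fun _ ↦ hY.aemeasurable
  have hmgf : ∀ j, mgf (X j) (Measure.pi fun _ ↦ D) t = mgf Y D t := fun j ↦ by
    have := integral_map (μ := Measure.pi fun _ ↦ D) (measurable_pi_apply j).aemeasurable
      (f := fun z ↦ exp (t * Y z)) (by fun_prop)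
    rwa [(measurePreserving_eval (fun _ ↦ D) j).map_eq, eq_comm] at this
  have hint' : ∀ j ∈ Finset.univ, Integrable (fun ω ↦ exp (t * X j ω)) (Measure.pi fun _ ↦ D) :=
    fun j _ ↦ (measurePreserving_eval (fun _ ↦ D) j).integrable_comp_of_integrable hint
  have hsum : ∀ ω, ∑ j, Y (ω j) = (∑ j, X j) ω := fun ω ↦ by simp [X]
  simp_rw [hsum]
  calc _ ≤ exp (-t * r) * mgf (∑ j, X j) (Measure.pi fun _ ↦ D) t :=
        measure_ge_le_exp_mul_mgf r ht (hindep.integrable_exp_mul_sum hX hint')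
    _ = exp (-t * r) * mgf Y D t ^ n := by
        rw [hindep.mgf_sum hX, Finset.prod_congr rfl fun j _ ↦ hmgf j]
        simp

lemma measureReal_pi_le_abs_centeredSum_le {n : ℕ} {Y : Z → ℝ} (hY : Measurable Y) {a b : ℝ}
    (hab : ∀ z, Y z ∈ Set.Icc a b) {t c : ℝ} (ht : 0 ≤ t)
    (hc : mgf (fun z ↦ Y z - D[Y]) D t ≤ c) (hc' : mgf (fun z ↦ Y z - D[Y]) D (-t) ≤ c)
    (r : ℝ) :
    (Measure.pi fun _ : Fin n ↦ D).real {ω | r ≤ |centeredSum D Y ω|} ≤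
      2 * exp (-t * r) * c ^ n := by
  set W : Z → ℝ := fun z ↦ Y z - D[Y]
  have hW : Measurable W := hY.sub_const _
  have hbdd : ∀ᵐ z ∂D, W z ∈ Set.Icc (a - D[Y]) (b - D[Y]) :=
    ae_of_all _ fun z ↦ ⟨by simp [W, (hab z).1], by simp [W, (hab z).2]⟩
  have hsub : {ω : Fin n → Z | r ≤ |centeredSum D Y ω|} ⊆
      {ω | r ≤ ∑ j, W (ω j)} ∪ {ω | r ≤ ∑ j, (-W) (ω j)} := fun ω hω ↦ by
    simp only [centeredSum, Pi.neg_apply, Finset.sum_neg_distrib, Set.mem_union,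
      Set.mem_ofPred_eq] at hω ⊢
    rcases le_abs'.1 hω with h | h
    · right; linarith
    · left; exact h
  have hupper := measureReal_pi_le_sum_le (n := n) hW ht
    (integrable_exp_mul_of_mem_Icc hW.aemeasurable hbdd) r
  have hlower := measureReal_pi_le_sum_le (n := n) hW.neg ht
    (integrable_exp_mul_of_mem_Icc hW.neg.aemeasurable (hbdd.mono fun z hz ↦
      (⟨neg_le_neg hz.2, neg_le_neg hz.1⟩ : (-W) z ∈ Set.Icc _ _))) r
  rw [mgf_neg] at hlower
  calc _ ≤ _ := measureReal_mono hsub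
    _ ≤ _ := measureReal_union_le _ _
    _ ≤ exp (-t * r) * c ^ n + exp (-t * r) * c ^ n := by
        gcongr
        · exact hupper.trans (by gcongr; exact mgf_nonneg)
        · exact hlower.trans (by gcongr; exact mgf_nonneg)
    _ = _ := by ring

lemma mgf_sub_integral_le_of_ternary {Y : Z → ℝ} (hY : Measurable Y)
    (hval : ∀ z, Y z = -1 ∨ Y z = 0 ∨ Y z = 1) {p t : ℝ} (ht : 0 ≤ t)
    (hp : D.real {z | Y z ≠ 0} ≤ p) :
    mgf (fun z ↦ Y z - D[Y]) D t ≤ exp (p * (exp t - 1 - t)) := by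
  have hbdd : ∀ z, Y z ∈ Set.Icc (-1) 1 := fun z ↦ by rcases hval z with h | h | h <;> simp [h]
  have hYint : Integrable Y D :=
    Integrable.of_mem_Icc (-1) 1 hY.aemeasurable (ae_of_all _ hbdd)
  have hsq : (fun z ↦ Y z ^ 2) = Set.indicator {z | Y z ≠ 0} 1 := funext fun z ↦ by
    rcases hval z with h | h | h <;> simp [h]
  have hsupp : MeasurableSet {z | Y z ≠ 0} := (measurableSet_eq_fun hY measurable_const).compl
  have hsqint : Integrable (fun z ↦ Y z ^ 2) D := by
    rw [hsq]; exact (integrable_const 1).indicator hsupp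
  have hsqD : ∫ z, Y z ^ 2 ∂D = D.real {z | Y z ≠ 0} := by
    rw [hsq]; exact integral_indicator_one hsupp
  have hκ : 0 ≤ exp t - 1 - t := by linarith [add_one_le_exp t]
  have hlin : Integrable (fun z ↦ 1 + t * Y z) D := (integrable_const 1).add (hYint.const_mul t)
  have hmgf : mgf Y D t ≤ 1 + t * D[Y] + p * (exp t - 1 - t) := calc
    mgf Y D t ≤ ∫ z, (1 + t * Y z + Y z ^ 2 * (exp t - 1 - t)) ∂D :=
        integral_mono (integrable_exp_mul_of_mem_Icc hY.aemeasurable (ae_of_all _ hbdd))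
          (hlin.add (hsqint.mul_const _))
          fun z ↦ exp_mul_le_one_add_mul_add_sq_mul (hval z) ht
    _ = 1 + t * D[Y] + D.real {z | Y z ≠ 0} * (exp t - 1 - t) := by
        rw [integral_add hlin (hsqint.mul_const _),
          integral_add (integrable_const 1) (hYint.const_mul t), integral_mul_const,
          integral_const_mul, hsqD]
        simp
    _ ≤ 1 + t * D[Y] + p * (exp t - 1 - t) := by gcongr
  calc mgf (fun z ↦ Y z - D[Y]) D t = mgf Y D t * exp (t * -D[Y]) := by
        simp_rw [sub_eq_add_neg]; exact mgf_add_const _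
    _ ≤ exp (t * D[Y] + p * (exp t - 1 - t)) * exp (t * -D[Y]) := by
        gcongr
        linarith [add_one_le_exp (t * D[Y] + p * (exp t - 1 - t))]
    _ = exp (p * (exp t - 1 - t)) := by rw [← exp_add]; ring_nf

lemma measureReal_pi_le_abs_centeredSum_le_hoeffding {n : ℕ} {Y : Z → ℝ} (hY : Measurable Y)
    {a b : ℝ} (hab : ∀ z, Y z ∈ Set.Icc a b) {r : ℝ} (hr : 0 ≤ r) :
    (Measure.pi fun _ : Fin n ↦ D).real {ω | r ≤ |centeredSum D Y ω|} ≤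
      2 * exp (-(2 * r ^ 2 / (n * (b - a) ^ 2))) := by
  set d : ℝ := n * (b - a) ^ 2
  set t : ℝ := 4 * r / d
  have hsg := hasSubgaussianMGF_of_mem_Icc hY.aemeasurable (ae_of_all D hab)
  have hc : ((‖b - a‖₊ / 2) ^ 2 : NNReal) = (b - a) ^ 2 / 4 := by
    push_cast
    rw [Real.norm_eq_abs, div_pow, sq_abs]
    norm_num
  refine (measureReal_pi_le_abs_centeredSum_le hY hab (by positivity) (hsg.mgf_le t)
    (by simpa using hsg.mgf_le (-t)) r).trans ?_
  rw [hc, ← exp_nat_mul, mul_assoc, ← exp_add]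
  gcongr
  rcases eq_or_ne d 0 with hd | hd
  · simp [t, hd]
  · have hdt : (n : ℝ) * ((b - a) ^ 2 / 4 * t ^ 2 / 2) = d * t ^ 2 / 8 := by ring
    rw [hdt]
    apply le_of_eq
    simp only [t]
    field_simp
    ring

lemma measureReal_pi_le_abs_centeredSum_le_of_ternary {n : ℕ} (hn : 0 < n) {Y : Z → ℝ}
    (hY : Measurable Y) (hval : ∀ z, Y z = -1 ∨ Y z = 0 ∨ Y z = 1) {p : ℝ} (hp0 : 0 < p)
    (hp : D.real {z | Y z ≠ 0} ≤ p) {r : ℝ} (hr : 0 ≤ r) :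
    (Measure.pi fun _ : Fin n ↦ D).real {ω | r ≤ |centeredSum D Y ω|} ≤
      2 * exp (-(r / 2 * log (1 + r / (2 * (n * p))))) := by
  have hm : 0 < (n : ℝ) * p := by positivity
  -- the minimiser of the Chernoff exponent `-t r + n p (exp t - 1 - t)`
  set t : ℝ := log (1 + r / (n * p))
  have ht : 0 ≤ t := log_nonneg (by linarith [div_nonneg hr hm.le])
  have hexp : exp t = 1 + r / (n * p) := exp_log (by positivity)
  have hneg : ∀ z, -Y z - D[fun z ↦ -Y z] = -(Y z - D[Y]) := fun z ↦ by
    rw [integral_neg]; ring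
  have hc' := mgf_sub_integral_le_of_ternary (Y := fun z ↦ -Y z) hY.neg
    (fun z ↦ by rcases hval z with h | h | h <;> simp [h]) ht (p := p) (by simpa using hp)
  simp_rw [hneg] at hc'
  refine (measureReal_pi_le_abs_centeredSum_le hY
    (fun z ↦ (by rcases hval z with h | h | h <;> simp [h] : Y z ∈ Set.Icc (-1) 1)) ht
    (mgf_sub_integral_le_of_ternary hY hval ht hp) (by rwa [← mgf_neg]) r).trans ?_
  rw [← exp_nat_mul, mul_assoc, ← exp_add]
  gcongr
  have key : r + r / 2 * log (1 + r / (2 * (n * p))) ≤ (r + n * p) * t :=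
    add_div_two_mul_log_le hm hr
  have hlin : (n : ℝ) * (p * (exp t - 1 - t)) = r - n * p * t := by
    rw [hexp]; field_simp; ring
  linarith

lemma measureReal_pi_le_abs_centeredSum_sub_le {n : ℕ} (hn : 0 < n) {f q : Z → ℝ}
    (hf : Measurable f) (hq : Measurable q) (hfv : ∀ z, f z = 0 ∨ f z = 1)
    (hqv : ∀ z, q z = 0 ∨ q z = 1) {η : ℝ} (hη : η < 1) (hagree : η ≤ D.real {z | q z = f z})
    {ε : ℝ} (hε : 0 ≤ ε) :
    (Measure.pi fun _ : Fin n ↦ D).real {ω | n * ε / 2 ≤ |centeredSum D (fun z ↦ f z - q z) ω|} ≤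
      2 * exp (-(n * ε / 4 * log (1 + ε / (4 * (1 - η))))) := by
  have hval : ∀ z, f z - q z = -1 ∨ f z - q z = 0 ∨ f z - q z = 1 := fun z ↦ by
    rcases hfv z with h₁ | h₁ <;> rcases hqv z with h₂ | h₂ <;> simp [h₁, h₂]
  have hsupp : D.real {z | f z - q z ≠ 0} ≤ 1 - η := by
    have : {z | f z - q z ≠ 0} = {z | q z = f z}ᶜ := by
      ext z; simp [sub_eq_zero, eq_comm]
    rw [this, probReal_compl_eq_one_sub (measurableSet_eq_fun hq hf)]
    linarith
  have hexp : n * ε / 2 / 2 * log (1 + n * ε / 2 / (2 * (n * (1 - η)))) =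
      n * ε / 4 * log (1 + ε / (4 * (1 - η))) := by
    have hn' : (0 : ℝ) < n := by exact_mod_cast hn
    field_simp
    ring_nf
  rw [← hexp]
  exact measureReal_pi_le_abs_centeredSum_le_of_ternary hn (Y := fun z ↦ f z - q z) (hf.sub hq)
    hval (by linarith) hsupp (by positivity)

theorem measureReal_pi_exists_abs_empirical_sub_integral_gt_le {n : ℕ} (hn : 0 < n)
    {ε η : ℝ} (hε : 0 < ε) (hη : η < 1) {F M : Finset (Z → ℝ)}
    (hFmeas : ∀ f ∈ F, Measurable f) (hFval : ∀ f ∈ F, ∀ z, f z = 0 ∨ f z = 1)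
    (hMmeas : ∀ q ∈ M, Measurable q) (hMval : ∀ q ∈ M, ∀ z, q z = 0 ∨ q z = 1)
    (hcover : ∀ f ∈ F, ∃ q ∈ M, η ≤ D.real {z | q z = f z}) :
    (Measure.pi fun _ : Fin n ↦ D).real
        {ω | ∃ f ∈ F, ε < |(1 / n : ℝ) * ∑ j, f (ω j) - D[f]|} ≤
      2 * M.card * exp (-(n * ε ^ 2 / 2)) +
        2 * F.card * exp (-(n * ε / 4 * log (1 + ε / (4 * (1 - η))))) := by
  choose! q hqM hq using hcover
  set r : ℝ := n * ε / 2
  have hn' : (0 : ℝ) < n := by exact_mod_cast hn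
  have hr : 0 ≤ r := by positivity
  have hIcc : ∀ h : Z → ℝ, (∀ z, h z = 0 ∨ h z = 1) → ∀ z, h z ∈ Set.Icc 0 1 :=
    fun h hv z ↦ by rcases hv z with e | e <;> simp [e]
  have hint : ∀ h : Z → ℝ, Measurable h → (∀ z, h z = 0 ∨ h z = 1) → Integrable h D :=
    fun h hm hv ↦ Integrable.of_mem_Icc 0 1 hm.aemeasurable (ae_of_all _ (hIcc h hv))
  have hsub : {ω : Fin n → Z | ∃ f ∈ F, ε < |(1 / n : ℝ) * ∑ j, f (ω j) - D[f]|} ⊆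
      (⋃ g ∈ M, {ω | r ≤ |centeredSum D g ω|}) ∪
        ⋃ f ∈ F, {ω | r ≤ |centeredSum D (fun z ↦ f z - q f z) ω|} := by
    rintro ω ⟨f, hf, hω⟩
    rcases half_le_abs_centeredSum_or_of_lt hn (hint f (hFmeas f hf) (hFval f hf))
      (hint _ (hMmeas _ (hqM f hf)) (hMval _ (hqM f hf))) hω with h | h
    · exact Or.inl (Set.mem_biUnion (hqM f hf) h)
    · exact Or.inr (Set.mem_biUnion hf h)
  have hMterm : ∀ g ∈ M, (Measure.pi fun _ : Fin n ↦ D).real {ω | r ≤ |centeredSum D g ω|} ≤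
      2 * exp (-(n * ε ^ 2 / 2)) := fun g hg ↦ by
    have hexp : 2 * r ^ 2 / (n * (1 - 0) ^ 2) = n * ε ^ 2 / 2 := by
      simp only [r]; field_simp; ring
    rw [← hexp]
    exact measureReal_pi_le_abs_centeredSum_le_hoeffding (hMmeas g hg) (hIcc g (hMval g hg)) hr
  have hFterm : ∀ f ∈ F, (Measure.pi fun _ : Fin n ↦ D).real
      {ω | r ≤ |centeredSum D (fun z ↦ f z - q f z) ω|} ≤
      2 * exp (-(n * ε / 4 * log (1 + ε / (4 * (1 - η))))) := fun f hf ↦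
    measureReal_pi_le_abs_centeredSum_sub_le hn (hFmeas f hf) (hMmeas _ (hqM f hf)) (hFval f hf)
      (hMval _ (hqM f hf)) hη (hq f hf) hε.le
  calc _ ≤ _ := measureReal_mono hsub
    _ ≤ _ := measureReal_union_le _ _
    _ ≤ _ := add_le_add (measureReal_biUnion_finset_le _ _) (measureReal_biUnion_finset_le _ _)
    _ ≤ _ := add_le_add (Finset.sum_le_sum hMterm) (Finset.sum_le_sum hFterm)
    _ = _ := by simp only [Finset.sum_const, nsmul_eq_mul]; ring

end

lemma two_mul_mul_exp_neg_two_mul_le {N x a δ : ℝ} (hN : N ≤ x ^ a) (hx : 1 ≤ x) (ha : 0 ≤ a)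
    (hδ : 0 < δ) (hδ1 : δ ≤ 1) :
    2 * N * exp (-(2 * (a * log x + log (2 / δ)))) ≤ δ / 2 := by
  have hNx : N * exp (-(2 * (a * log x))) ≤ 1 := calc
    N * exp (-(2 * (a * log x))) ≤ x ^ a * exp (-(2 * (a * log x))) := by gcongr
    _ = exp (-(a * log x)) := by
        rw [rpow_def_of_pos (by linarith), ← exp_add]; ring_nf
    _ ≤ 1 := exp_le_one_iff.2 (by have := log_nonneg hx; nlinarith)
  have hδsq : exp (-(2 * log (2 / δ))) = (δ / 2) ^ 2 := by
    rw [show -(2 * log (2 / δ)) = -log (2 / δ) + -log (2 / δ) by ring, exp_add, exp_neg,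
      exp_log (by positivity), inv_div]
    ring
  calc 2 * N * exp (-(2 * (a * log x + log (2 / δ))))
      = 2 * (N * exp (-(2 * (a * log x)))) * exp (-(2 * log (2 / δ))) := by
        rw [mul_add, neg_add, exp_add]; ring
    _ ≤ 2 * 1 * (δ / 2) ^ 2 := by rw [hδsq]; gcongr
    _ ≤ δ / 2 := by nlinarith

lemma two_mul_mul_exp_neg_mul_le {N x b c δ : ℝ} {k : ℕ} (hN0 : 0 ≤ N) (hN : N ≤ x ^ (k - 1))
    (hk : 0 < k) (hx : 2 ≤ x) (hb : 1 ≤ b) (hbc : b * c = k) (hδ : 0 < δ) (hδ2 : δ ≤ 2) :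
    2 * N * exp (-(b * (c * log x + log (2 / δ)))) ≤ δ / 2 := by
  have hl : 0 ≤ log (2 / δ) := log_nonneg (by rw [le_div_iff₀ hδ]; linarith)
  have hexp : exp (-(b * (c * log x + log (2 / δ)))) ≤ (x ^ k)⁻¹ * (δ / 2) := calc
    exp (-(b * (c * log x + log (2 / δ)))) ≤ exp (-(k * log x) + -log (2 / δ)) := by
        gcongr
        rw [mul_add, ← mul_assoc, hbc]
        nlinarith
    _ = (x ^ k)⁻¹ * (δ / 2) := by
        rw [exp_add, exp_neg, exp_neg, ← log_pow, exp_log (by positivity),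
          exp_log (by positivity), inv_div]
  have hNx : N * (x ^ k)⁻¹ ≤ 1 / 2 := by
    rw [← div_eq_mul_inv, div_le_iff₀ (by positivity)]
    calc N ≤ x ^ (k - 1) := hN
      _ ≤ 1 / 2 * x ^ k := by
          rw [← Nat.sub_add_cancel hk, pow_succ, Nat.add_sub_cancel]
          nlinarith [pow_pos (by linarith : (0 : ℝ) < x) (k - 1)]
  calc 2 * N * exp (-(b * (c * log x + log (2 / δ))))
      ≤ 2 * N * ((x ^ k)⁻¹ * (δ / 2)) := by gcongr
    _ = 2 * (N * (x ^ k)⁻¹) * (δ / 2) := by ring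
    _ ≤ 2 * (1 / 2) * (δ / 2) := by gcongr
    _ = δ / 2 := by ring

lemma eta_lt_one_and_log_eq {ε s η : ℝ} (hε : 0 < ε) (hs : 0 < s)
    (hη : η = 1 - ε / (4 * (exp s - 1))) : η < 1 ∧ log (1 + ε / (4 * (1 - η))) = s := by
  have hu : 0 < exp s - 1 := sub_pos.2 (one_lt_exp_iff.2 hs)
  refine ⟨by rw [hη, sub_lt_self_iff]; positivity, ?_⟩
  rw [hη, sub_sub_cancel]
  convert log_exp s using 2
  field_simp
  ring

lemma eps_pos_and_eta_lt_one_and_bound_le {n k : ℕ} (hn : 0 < n) (hk : 0 < k)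
    {α δ ε η N N' : ℝ} (hα0 : 0 ≤ α) (hδ : 0 < δ) (hδ1 : δ < 1)
    (hε : ε = sqrt (4 * ((k : ℝ) ^ (1 - α) * log (n + 1) + log (2 / δ)) / n))
    (hη : η = 1 - ε / (4 * (exp (ε * (k : ℝ) ^ α) - 1)))
    (hN : N ≤ (n + 1 : ℝ) ^ ((k : ℝ) ^ (1 - α))) (hN'0 : 0 ≤ N')
    (hN' : N' ≤ (n + 1 : ℝ) ^ (k - 1)) :
    0 < ε ∧ η < 1 ∧ 2 * N * exp (-(n * ε ^ 2 / 2)) +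
      2 * N' * exp (-(n * ε / 4 * log (1 + ε / (4 * (1 - η))))) ≤ δ := by
  have hn1 : (1 : ℝ) ≤ n := by exact_mod_cast hn
  have hk1 : (1 : ℝ) ≤ k := by exact_mod_cast hk
  set A := (k : ℝ) ^ (1 - α) * log (n + 1) + log (2 / δ)
  have hA : 0 < A := by
    have := log_nonneg (by linarith : (1 : ℝ) ≤ n + 1)
    have := log_pos (by rw [lt_div_iff₀ hδ]; linarith : (1 : ℝ) < 2 / δ)
    positivity
  have hεA : n * ε ^ 2 = 4 * A := by rw [hε, sq_sqrt (by positivity)]; field_simp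
  have hε0 : 0 < ε := by rw [hε]; positivity
  obtain ⟨hη1, hlog⟩ := eta_lt_one_and_log_eq hε0 (by positivity) hη
  have hcover : 2 * N * exp (-(n * ε ^ 2 / 2)) ≤ δ / 2 := by
    rw [hεA, show 4 * A / 2 = 2 * A by ring]
    exact two_mul_mul_exp_neg_two_mul_le hN (by linarith) (by positivity) hδ hδ1.le
  have hqueries : 2 * N' * exp (-(n * ε / 4 * log (1 + ε / (4 * (1 - η))))) ≤ δ / 2 := by
    rw [hlog, show n * ε / 4 * (ε * (k : ℝ) ^ α) = (k : ℝ) ^ α * A by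
      linear_combination (k : ℝ) ^ α / 4 * hεA]
    refine two_mul_mul_exp_neg_mul_le hN'0 hN' hk (by linarith) (one_le_rpow hk1 hα0) ?_ hδ
      (by linarith)
    rw [← rpow_add (by positivity), add_sub_cancel, rpow_one]
  exact ⟨hε0, hη1, by linarith⟩

theorem stmt_17_general {Z : Type*} [MeasurableSpace Z] (D : Measure Z) [IsProbabilityMeasure D]
    (n k : ℕ) (hn : 0 < n) (hk : 0 < k)
    (α δ ε η : ℝ) (hα0 : 0 ≤ α) (hδ : 0 < δ) (hδ1 : δ < 1)
    (hε : ε = Real.sqrt (4 * ((k : ℝ) ^ (1 - α) * Real.log (n + 1) + Real.log (2 / δ)) / n))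
    (hη : η = 1 - ε / (4 * (Real.exp (ε * (k : ℝ) ^ α) - 1)))
    (F : Finset (Z → ℝ)) (hFcard : F.card ≤ (n + 1) ^ (k - 1))
    (hFmeas : ∀ f ∈ F, Measurable f) (hFval : ∀ f ∈ F, ∀ z, f z = 0 ∨ f z = 1)
    (M : Finset (Z → ℝ)) (hMmeas : ∀ m ∈ M, Measurable m)
    (hMval : ∀ m ∈ M, ∀ z, m z = 0 ∨ m z = 1)
    (hMcard : (M.card : ℝ) ≤ (n + 1 : ℝ) ^ ((k : ℝ) ^ (1 - α)))
    (hcover : ∀ f ∈ F, ∃ q' ∈ M, ∃ q'' ∈ M,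
      (∫ z, q' z ∂D) ≤ (∫ z, f z ∂D) ∧ (∫ z, f z ∂D) ≤ (∫ z, q'' z ∂D) ∧
      η ≤ (D {z | q' z = f z}).toReal ∧ η ≤ (D {z | q'' z = f z}).toReal)
    (Qs : Fin k → (Fin n → Z) → (Z → ℝ)) (hQs : ∀ i ω, Qs i ω ∈ F) :
    ((Measure.pi fun _ : Fin n => D)
      {ω | ∀ i : Fin k,
        |(1 / n : ℝ) * ∑ j, (Qs i ω) (ω j) - ∫ z, (Qs i ω) z ∂D| ≤ ε}).toReal ≥
      1 - δ := by
  obtain ⟨hε0, hη1, hδbound⟩ := eps_pos_and_eta_lt_one_and_bound_le hn hk hα0 hδ hδ1 hε hη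
    hMcard (Nat.cast_nonneg F.card) (by exact_mod_cast hFcard)
  have hbad := measureReal_pi_exists_abs_empirical_sub_integral_gt_le hn hε0 hη1 hFmeas hFval
    hMmeas hMval fun f hf ↦ by
      obtain ⟨q, hq, -, -, -, -, h, -⟩ := hcover f hf
      exact ⟨q, hq, h⟩
  have hsub : Set.univ ⊆ {ω : Fin n → Z | ∀ i : Fin k,
        |(1 / n : ℝ) * ∑ j, (Qs i ω) (ω j) - ∫ z, (Qs i ω) z ∂D| ≤ ε} ∪
      {ω | ∃ f ∈ F, ε < |(1 / n : ℝ) * ∑ j, f (ω j) - D[f]|} := fun ω _ ↦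
    or_iff_not_imp_left.2 fun h ↦
      let ⟨i, hi⟩ := not_forall.1 h
      ⟨Qs i ω, hQs i ω, not_le.1 hi⟩
  have := (measureReal_mono (μ := Measure.pi fun _ : Fin n ↦ D) hsub).trans
    (measureReal_union_le _ _)
  rw [probReal_univ] at this
  rw [ge_iff_le, ← measureReal_def]
  linarith

/-- Corollary 1 (adaptive classification): the adaptively chosen queries all lie
in the set `F` of at most `(n+1)^{k-1}` potential queries of a deterministic
analyst; if `F` admits an `η` similarity cover of size at most
`(n+1)^{k^{1-α}}` for the stated `ε` and `η`, then with probability `1 - δ`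
every adaptively chosen query has deviation at most `ε`. -/
theorem stmt_17 {Z : Type*} [MeasurableSpace Z] (D : Measure Z) [IsProbabilityMeasure D]
    (n k : ℕ) (hn : 0 < n) (hk : 0 < k)
    (α δ ε η : ℝ) (hα0 : 0 ≤ α) (hα1 : α ≤ 1) (hδ : 0 < δ) (hδ1 : δ < 1)
    (hε : ε = Real.sqrt (4 * ((k : ℝ) ^ (1 - α) * Real.log (n + 1) + Real.log (2 / δ)) / n))
    (hη : η = 1 - ε / (4 * (Real.exp (ε * (k : ℝ) ^ α) - 1)))
    (F : Finset (Z → ℝ)) (hFcard : F.card ≤ (n + 1) ^ (k - 1))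
    (hFmeas : ∀ f ∈ F, Measurable f) (hFval : ∀ f ∈ F, ∀ z, f z = 0 ∨ f z = 1)
    (M : Finset (Z → ℝ)) (hMmeas : ∀ m ∈ M, Measurable m)
    (hMval : ∀ m ∈ M, ∀ z, m z = 0 ∨ m z = 1)
    (hMcard : (M.card : ℝ) ≤ (n + 1 : ℝ) ^ ((k : ℝ) ^ (1 - α)))
    (hcover : ∀ f ∈ F, ∃ q' ∈ M, ∃ q'' ∈ M,
      (∫ z, q' z ∂D) ≤ (∫ z, f z ∂D) ∧ (∫ z, f z ∂D) ≤ (∫ z, q'' z ∂D) ∧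
      η ≤ (D {z | q' z = f z}).toReal ∧ η ≤ (D {z | q'' z = f z}).toReal)
    (Qs : Fin k → (Fin n → Z) → (Z → ℝ)) (hQs : ∀ i ω, Qs i ω ∈ F) :
    ((Measure.pi fun _ : Fin n => D)
      {ω | ∀ i : Fin k,
        |(1 / n : ℝ) * ∑ j, (Qs i ω) (ω j) - ∫ z, (Qs i ω) z ∂D| ≤ ε}).toReal ≥
      1 - δ :=
  stmt_17_general D n k hn hk α δ ε η hα0 hδ hδ1 hε hη F hFcard hFmeas hFval M hMmeas hMval hMcard
    hcover Qs hQs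
end

section
/- Let q, q̃ : Z → {0,1} with P(q(z) = q̃(z)) ≥ η and E_D[q] ≥ E_D[q̃], evaluated on an i.i.d. test set of size n. Then for any ε > 0, P(Ê_S[q̃] − E_D[q̃] + ε/2 ≤ Ê_S[q] − E_D[q]) ≤ exp(−(nε/4)·log(1 + ε/(4(1−η)))). -/
/-!
Put `X = q - q̃`, a `{-1, 0, 1}`-valued variable with `P(X ≠ 0) ≤ 1 - η`. For `x ∈ {-1, 0, 1}`
and `L ≥ 0` one has `exp (L x) ≤ 1 + L x + (e^L - 1 - L) x²`, so the moment generating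
function of `X` is at most `exp (L E[X] + (1 - η)(e^L - 1 - L))`. Chernoff's bound for the
i.i.d. sum, with `L = log (1 + s)` and `s = ε / (4 (1 - η))`, then gives the claim, because
`s - log (1 + s) ≤ s log (1 + s)`.
-/

open MeasureTheory ProbabilityTheory Real

lemma exp_mul_le_of_ternary {L x : ℝ} (hL : 0 ≤ L) (hx : x = -1 ∨ x = 0 ∨ x = 1) :
    exp (L * x) ≤ 1 + L * x + (exp L - 1 - L) * x ^ 2 := by
  rcases hx with rfl | rfl | rfl
  · have h_sinh : L ≤ sinh L := self_le_sinh_iff.2 hL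
    rw [sinh_eq] at h_sinh
    simp only [mul_neg, mul_one]
    linarith
  · simp
  · simp

lemma sub_log_one_add_le_mul_log_one_add {s : ℝ} (hs : 0 ≤ s) :
    s - log (1 + s) ≤ s * log (1 + s) := by
  linarith [self_sub_one_le_mul_log (x := 1 + s) (by linarith)]

lemma mul_le_sum_of_le_one_div_mul_sum {n : ℕ} {x : Fin n → ℝ} {c : ℝ}
    (h : c ≤ (1 / n : ℝ) * ∑ j, x j) : n * c ≤ ∑ j, x j := by
  rcases n.eq_zero_or_pos with rfl | hn
  · simp
  rwa [one_div_mul_eq_div, le_div_iff₀' (by exact_mod_cast hn)] at h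

section Chernoff

variable {Z : Type*} [MeasurableSpace Z] {μ : Measure Z}

lemma mgf_sum_pi_eq_pow {ι : Type*} [Fintype ι] [SigmaFinite μ] (X : Z → ℝ) (t : ℝ) :
    mgf (fun ω : ι → Z ↦ ∑ i, X (ω i)) (Measure.pi fun _ ↦ μ) t =
      mgf X μ t ^ Fintype.card ι := by
  simp only [mgf, Finset.mul_sum, exp_sum]
  exact integral_fintype_prod_eq_pow fun z ↦ exp (t * X z)

lemma measureReal_sum_pi_ge_le_exp_mul_mgf_pow {ι : Type*} [Fintype ι] [IsFiniteMeasure μ]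
    {X : Z → ℝ} (c : ℝ) {t : ℝ} (ht : 0 ≤ t)
    (h_int : Integrable (fun z ↦ exp (t * X z)) μ) :
    (Measure.pi fun _ : ι ↦ μ).real {ω | c ≤ ∑ i, X (ω i)} ≤
      exp (-t * c) * mgf X μ t ^ Fintype.card ι := by
  rw [← mgf_sum_pi_eq_pow]
  refine measure_ge_le_exp_mul_mgf c ht ?_
  simp only [Finset.mul_sum, exp_sum]
  exact Integrable.fintype_prod fun _ ↦ h_int

variable [IsProbabilityMeasure μ] {X : Z → ℝ}

lemma mgf_le_of_ternary (hX : Measurable X) (hXval : ∀ z, X z = -1 ∨ X z = 0 ∨ X z = 1)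
    {a L : ℝ} (hsupp : μ.real {z | X z ≠ 0} ≤ a) (hL : 0 ≤ L) :
    mgf X μ L ≤ exp (L * μ[X] + a * (exp L - 1 - L)) := by
  set c := exp L - 1 - L
  have hc : 0 ≤ c := by linarith [add_one_le_exp L]
  have hXbound : ∀ z, ‖X z‖ ≤ 1 := fun z ↦ by
    rcases hXval z with h | h | h <;> simp [h]
  have hX_int : Integrable X μ := .of_bound hX.aestronglyMeasurable 1 (.of_forall hXbound)
  have hsq : (fun z ↦ X z ^ 2) = {z | X z ≠ 0}.indicator 1 := by
    ext z
    rcases hXval z with h | h | h <;> simp [h]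
  have hsupp_meas : MeasurableSet {z | X z ≠ 0} := (hX (measurableSet_singleton 0)).compl
  have hsq_int : Integrable (fun z ↦ X z ^ 2) μ := by
    rw [hsq]
    exact (integrable_const 1).indicator hsupp_meas
  have hlin_int : Integrable (fun z ↦ 1 + L * X z) μ :=
    (integrable_const 1).add (hX_int.const_mul L)
  calc mgf X μ L
      ≤ ∫ z, (1 + L * X z + c * X z ^ 2) ∂μ :=
        integral_mono (integrable_exp_mul_of_le L 1 hL hX.aemeasurable
          (.of_forall fun z ↦ (abs_le.1 (hXbound z)).2)) (hlin_int.add (hsq_int.const_mul c))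
          fun z ↦ exp_mul_le_of_ternary hL (hXval z)
    _ = 1 + L * μ[X] + c * μ.real {z | X z ≠ 0} := by
        rw [integral_add hlin_int (hsq_int.const_mul c),
          integral_add (integrable_const 1) (hX_int.const_mul L), integral_const_mul,
          integral_const_mul, hsq, integral_indicator_one hsupp_meas]
        simp
    _ ≤ 1 + (L * μ[X] + a * c) := by nlinarith
    _ ≤ exp (L * μ[X] + a * c) := by linarith [add_one_le_exp (L * μ[X] + a * c)]

theorem measureReal_sum_pi_ge_le_of_ternary (hX : Measurable X)
    (hXval : ∀ z, X z = -1 ∨ X z = 0 ∨ X z = 1) {a t : ℝ} (ha : 0 < a) (ht : 0 < t)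
    (hsupp : μ.real {z | X z ≠ 0} ≤ a) (n : ℕ) :
    (Measure.pi fun _ : Fin n ↦ μ).real {ω | n * (μ[X] + t) ≤ ∑ j, X (ω j)} ≤
      exp (-(n * t / 2) * log (1 + t / (2 * a))) := by
  set s := t / (2 * a)
  set L := log (1 + s)
  have hs : 0 ≤ s := by positivity
  have hL : 0 ≤ L := log_nonneg (by linarith)
  have h_int : Integrable (fun z ↦ exp (L * X z)) μ :=
    integrable_exp_mul_of_le L 1 hL hX.aemeasurable
      (.of_forall fun z ↦ by rcases hXval z with h | h | h <;> simp [h])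
  have h_mgf : mgf X μ L ≤ exp (L * (μ[X] + t / 2)) := by
    refine (mgf_le_of_ternary hX hXval hsupp hL).trans (exp_le_exp.2 ?_)
    have hexpL : exp L = 1 + s := exp_log (by linarith)
    have hslack : a * (s - L) ≤ a * (s * L) :=
      mul_le_mul_of_nonneg_left (sub_log_one_add_le_mul_log_one_add hs) ha.le
    have has : a * s = t / 2 := by simp only [s]; field_simp
    rw [hexpL]
    nlinarith
  calc (Measure.pi fun _ : Fin n ↦ μ).real {ω | n * (μ[X] + t) ≤ ∑ j, X (ω j)}
      ≤ exp (-L * (n * (μ[X] + t))) * mgf X μ L ^ n := by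
        simpa using measureReal_sum_pi_ge_le_exp_mul_mgf_pow (ι := Fin n) _ hL h_int
    _ ≤ exp (-L * (n * (μ[X] + t))) * exp (L * (μ[X] + t / 2)) ^ n := by
        gcongr
        exact mgf_nonneg
    _ = exp (-(n * t / 2) * L) := by
        rw [← exp_nat_mul, ← exp_add]
        ring_nf

end Chernoff

lemma integrable_of_forall_eq_zero_or_eq_one {Z : Type*} [MeasurableSpace Z] {μ : Measure Z}
    [IsFiniteMeasure μ] {f : Z → ℝ} (hf : Measurable f) (hfval : ∀ z, f z = 0 ∨ f z = 1) :
    Integrable f μ :=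
  .of_bound hf.aestronglyMeasurable 1
    (.of_forall fun z ↦ by rcases hfval z with h | h <;> simp [h])

theorem stmt_18_general {Z : Type*} [MeasurableSpace Z] (D : Measure Z) [IsProbabilityMeasure D]
    (n : ℕ)
    (q qt : Z → ℝ) (hq : Measurable q) (hqt : Measurable qt)
    (hqval : ∀ z, q z = 0 ∨ q z = 1) (hqtval : ∀ z, qt z = 0 ∨ qt z = 1)
    (η ε : ℝ) (hη1 : η < 1) (hε : 0 < ε)
    (hsim : η ≤ (D {z | q z = qt z}).toReal) :
    ((Measure.pi fun _ : Fin n => D)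
      {ω | (1 / n : ℝ) * ∑ j, qt (ω j) - (∫ z, qt z ∂D) + ε / 2 ≤
        (1 / n : ℝ) * ∑ j, q (ω j) - ∫ z, q z ∂D}).toReal ≤
      Real.exp (-(n * ε / 4) * Real.log (1 + ε / (4 * (1 - η)))) := by
  set X : Z → ℝ := fun z ↦ q z - qt z
  have hXval : ∀ z, X z = -1 ∨ X z = 0 ∨ X z = 1 := fun z ↦ by
    rcases hqval z with h | h <;> rcases hqtval z with h' | h' <;> simp [X, h, h']
  have hmeanX : D[X] = (∫ z, q z ∂D) - ∫ z, qt z ∂D :=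
    integral_sub (integrable_of_forall_eq_zero_or_eq_one hq hqval)
      (integrable_of_forall_eq_zero_or_eq_one hqt hqtval)
  have hsupp : D.real {z | X z ≠ 0} ≤ 1 - η := by
    have hdisagree : {z | X z ≠ 0} = {z | q z = qt z}ᶜ := by
      ext z
      simp [X, sub_eq_zero]
    rw [hdisagree, probReal_compl_eq_one_sub (measurableSet_eq_fun hq hqt)]
    exact sub_le_sub_left hsim 1
  calc ((Measure.pi fun _ : Fin n => D) _).toReal
      ≤ (Measure.pi fun _ ↦ D).real {ω | n * (D[X] + ε / 2) ≤ ∑ j, X (ω j)} :=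
        measureReal_mono fun ω hω ↦ mul_le_sum_of_le_one_div_mul_sum (by
          simp only [X, Finset.sum_sub_distrib, hmeanX, mul_sub]
          linarith [hω.out])
    _ ≤ exp (-(n * (ε / 2) / 2) * log (1 + ε / 2 / (2 * (1 - η)))) :=
        measureReal_sum_pi_ge_le_of_ternary (hq.sub hqt) hXval (by linarith) (by positivity)
          hsupp n
    _ = exp (-(n * ε / 4) * log (1 + ε / (4 * (1 - η)))) := by
        rw [div_div, ← mul_assoc]
        ring_nf

/-- Deviation bound for a pair of similar queries: if `P(q = q̃) ≥ η` and
`E_D[q] ≥ E_D[q̃]`, then on an i.i.d. test set of size `n`,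
`P(Ê[q̃] - E[q̃] + ε/2 ≤ Ê[q] - E[q]) ≤ exp(-(nε/4)·log(1 + ε/(4(1-η))))`. -/
theorem stmt_18 {Z : Type*} [MeasurableSpace Z] (D : Measure Z) [IsProbabilityMeasure D]
    (n : ℕ) (hn : 0 < n)
    (q qt : Z → ℝ) (hq : Measurable q) (hqt : Measurable qt)
    (hqval : ∀ z, q z = 0 ∨ q z = 1) (hqtval : ∀ z, qt z = 0 ∨ qt z = 1)
    (η ε : ℝ) (hη0 : 0 ≤ η) (hη1 : η < 1) (hε : 0 < ε)
    (hsim : η ≤ (D {z | q z = qt z}).toReal)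
    (hmean : (∫ z, qt z ∂D) ≤ ∫ z, q z ∂D) :
    ((Measure.pi fun _ : Fin n => D)
      {ω | (1 / n : ℝ) * ∑ j, qt (ω j) - (∫ z, qt z ∂D) + ε / 2 ≤
        (1 / n : ℝ) * ∑ j, q (ω j) - ∫ z, q z ∂D}).toReal ≤
      Real.exp (-(n * ε / 4) * Real.log (1 + ε / (4 * (1 - η)))) :=
  stmt_18_general D n q qt hq hqt hqval hqtval η ε hη1 hε hsim
end
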